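/- arXiv:2110.10532 — 3 statements merged into one kernel-verified Lean document; each statement's English description precedes it below -/
import Mathlib

section
/- Identification of the incremental effect for one time point (regression form): Let (X, A, Y) be random variables with A binary. Assume consistency (Y = Y^a on {A = a}) and exchangeability (A ⟂ Y^a | X) for a ∈ {0,1}. Let π(x) = P(A=1|X=x), μ(x,a) = E[Y|X=x, A=a], and let Q be the distribution assigning treatment 1 with probability q(π(X); δ) = δπ(X)/(δπ(X)+1-π(X)). Then E[Y^Q] = E[ (δπ(X)μ(X,1) + (1-π(X))μ(X,0)) / (δπ(X) + 1 - π(X)) ]. -/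
/-!
Exchangeability makes `1{A = a}` and `Yᵃ` conditionally independent given `X`, so
`E[1{A = a} Yᵃ | X] = P(A = a | X) E[Yᵃ | X]`; this factorisation is proved fibrewise, since under
the conditional-expectation kernel the two variables are independent for almost every `ω`. By
consistency the left side is `E[1{A = a} Y | X]`, whose integrals over `{X ∈ S}` are those of
`1{A = a} μ(X, a)`, i.e. of `P(A = a | X) μ(X, a)`. Hence `π(X) E[Y¹ | X] = π(X) μ(X, 1)` and
`(1 - π(X)) E[Y⁰ | X] = (1 - π(X)) μ(X, 0)` almost surely, and the theorem reduces to the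
pointwise identity `q a + (1 - q) b = (δ π a + (1 - π) b) / (δ π + 1 - π)`.
-/

open MeasureTheory ProbabilityTheory

namespace MeasureTheory

variable {Ω : Type*} {m mΩ : MeasurableSpace Ω} {μ : Measure Ω} [IsFiniteMeasure μ]

theorem condExp_mem_Icc (hm : m ≤ mΩ) {f : Ω → ℝ} {a b : ℝ} (hf : Integrable f μ)
    (hab : ∀ᵐ ω ∂μ, f ω ∈ Set.Icc a b) : ∀ᵐ ω ∂μ, μ[f | m] ω ∈ Set.Icc a b := by
  have ha := condExp_mono (m := m) (integrable_const a) hf (hab.mono fun _ h => h.1)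
  have hb := condExp_mono (m := m) hf (integrable_const b) (hab.mono fun _ h => h.2)
  rw [condExp_const hm] at ha hb
  filter_upwards [ha, hb] with ω hωa hωb using ⟨hωa, hωb⟩

theorem ae_eq_of_forall_setIntegral_inter_eq (hm : m ≤ mΩ) {f g : Ω → ℝ} {t : ℕ → Set Ω}
    (ht_cover : ⋃ n, t n = Set.univ)
    (hf : ∀ n, IntegrableOn f (t n) μ) (hg : ∀ n, IntegrableOn g (t n) μ)
    (hfg : ∀ n s, MeasurableSet[m] s → ∫ ω in s ∩ t n, f ω ∂μ = ∫ ω in s ∩ t n, g ω ∂μ)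
    (hfm : AEStronglyMeasurable[m] f μ) (hgm : AEStronglyMeasurable[m] g μ) : f =ᵐ[μ] g := by
  rw [← Measure.restrict_univ (μ := μ), ← ht_cover]
  refine (ae_restrict_iUnion_iff _ _).2 fun n => ?_
  refine ae_eq_of_forall_setIntegral_eq_of_sigmaFinite' hm (fun s _ _ => (hf n).integrableOn)
    (fun s _ _ => (hg n).integrableOn) (fun s hs _ => ?_) hfm.restrict hgm.restrict
  rw [Measure.restrict_restrict (hm s hs)]
  exact hfg n s hs

theorem integral_mul_condExp_of_bound (hm : m ≤ mΩ) {f g : Ω → ℝ} (hf : StronglyMeasurable[m] f)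
    (hg : Integrable g μ) (c : ℝ) (hf_bound : ∀ᵐ ω ∂μ, ‖f ω‖ ≤ c) :
    ∫ ω, f ω * g ω ∂μ = ∫ ω, f ω * μ[g | m] ω ∂μ := by
  rw [← integral_condExp hm]
  exact integral_congr_ae (condExp_stronglyMeasurable_mul_of_bound hm hf hg c hf_bound)

variable {𝒳 : Type*} {m𝒳 : MeasurableSpace 𝒳} {X : Ω → 𝒳}

theorem setIntegral_preimage_inter_eq_setIntegral_mul (hX : Measurable X) {B : Set Ω}
    (hB : MeasurableSet B) {p r : 𝒳 → ℝ} (hr : Measurable r)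
    (hpX : (fun ω => p (X ω)) =ᵐ[μ] μ[B.indicator 1 | m𝒳.comap X]) {S : Set 𝒳}
    (hS : MeasurableSet S) {C : ℝ} (hrS : ∀ x ∈ S, |r x| ≤ C) :
    ∫ ω in X ⁻¹' S ∩ B, r (X ω) ∂μ = ∫ ω in X ⁻¹' S, p (X ω) * r (X ω) ∂μ := by
  set h : Ω → ℝ := fun ω => S.indicator r (X ω)
  have hh : StronglyMeasurable[m𝒳.comap X] h :=
    ((hr.indicator hS).comp (comap_measurable X)).stronglyMeasurable
  have hh_bound : ∀ ω, ‖h ω‖ ≤ |C| := fun ω => by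
    by_cases hω : X ω ∈ S
    · simpa [h, hω] using (hrS _ hω).trans (le_abs_self C)
    · simp [h, hω]
  calc ∫ ω in X ⁻¹' S ∩ B, r (X ω) ∂μ = ∫ ω, h ω * B.indicator 1 ω ∂μ := by
        rw [← integral_indicator ((hX hS).inter hB)]
        congr 1 with ω
        by_cases hω : X ω ∈ S <;> by_cases hωB : ω ∈ B <;> simp [h, hω, hωB]
    _ = ∫ ω, h ω * μ[B.indicator 1 | m𝒳.comap X] ω ∂μ :=
        integral_mul_condExp_of_bound hX.comap_le hh ((integrable_const 1).indicator hB) _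
          (ae_of_all _ hh_bound)
    _ = ∫ ω, h ω * p (X ω) ∂μ :=
        integral_congr_ae (hpX.symm.mono fun ω hω => congrArg (h ω * ·) hω)
    _ = ∫ ω in X ⁻¹' S, p (X ω) * r (X ω) ∂μ := by
        rw [← integral_indicator (hX hS)]
        congr 1 with ω
        by_cases hω : X ω ∈ S <;> simp [h, hω, mul_comm]

end MeasureTheory

namespace ProbabilityTheory

variable {Ω : Type*} {m mΩ : MeasurableSpace Ω} [StandardBorelSpace Ω]
  {hm : m ≤ mΩ} {μ : Measure Ω} [IsFiniteMeasure μ]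

theorem CondIndepFun.congr {β β' : Type*} {mβ : MeasurableSpace β} {mβ' : MeasurableSpace β'}
    {f f' : Ω → β} {g g' : Ω → β'} (h : CondIndepFun m hm f g μ)
    (hf : f =ᵐ[μ] f') (hg : g =ᵐ[μ] g') : CondIndepFun m hm f' g' μ := by
  refine Kernel.IndepFun.congr' h ?_ ?_ <;> apply Measure.ae_ae_of_ae_comp <;>
    rwa [condExpKernel_comp_trim]

theorem CondIndepFun.ae_indepFun_condExpKernel {f g : Ω → ℝ} (h : CondIndepFun m hm f g μ)
    (hf : Measurable f) (hg : Measurable g) :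
    ∀ᵐ ω ∂μ.trim hm, IndepFun f g (condExpKernel μ m ω) := by
  filter_upwards [(condIndepFun_iff_map_prod_eq_prod_map_map hf hg).1 h] with ω hω
  rw [indepFun_iff_map_prod_eq_prod_map_map hf.aemeasurable hg.aemeasurable]
  simpa [Kernel.map_apply _ (hf.prodMk hg), Kernel.map_apply _ hf, Kernel.map_apply _ hg,
    Kernel.prod_apply] using hω

theorem CondIndepFun.condExp_mul {f g : Ω → ℝ} (h : CondIndepFun m hm f g μ)
    (hf : Integrable f μ) (hg : Integrable g μ) (hfg : Integrable (f * g) μ) :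
    μ[f * g | m] =ᵐ[μ] μ[f | m] * μ[g | m] := by
  obtain ⟨f', hf'm, hff'⟩ := hf.aemeasurable
  obtain ⟨g', hg'm, hgg'⟩ := hg.aemeasurable
  have hfg' : f * g =ᵐ[μ] f' * g' := hff'.mul hgg'
  filter_upwards [condExp_congr_ae hfg', condExp_congr_ae hff', condExp_congr_ae hgg',
    condExp_ae_eq_integral_condExpKernel hm (hfg.congr hfg'),
    condExp_ae_eq_integral_condExpKernel hm (hf.congr hff'),
    condExp_ae_eq_integral_condExpKernel hm (hg.congr hgg'),
    ae_of_ae_trim hm ((h.congr hff' hgg').ae_indepFun_condExpKernel hf'm hg'm)]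
    with ω hfg'ω hf'ω hg'ω hfgω hfω hgω hω
  rw [hfg'ω, Pi.mul_apply, hf'ω, hg'ω, hfgω, hfω, hgω,
    hω.integral_mul_eq_mul_integral hf'm.aestronglyMeasurable hg'm.aestronglyMeasurable]

variable {𝒳 : Type*} {m𝒳 : MeasurableSpace 𝒳} {X : Ω → 𝒳}

theorem mul_condExp_ae_eq_mul_regression_of_condIndepFun (hX : Measurable X) {B : Set Ω}
    (hB : MeasurableSet B) {W Y : Ω → ℝ} (hW : Integrable W μ)
    (hindep : CondIndepFun (m𝒳.comap X) hX.comap_le (B.indicator (1 : Ω → ℝ)) W μ)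
    (hYW : ∀ ω ∈ B, Y ω = W ω) {p r : 𝒳 → ℝ} (hp : Measurable p) (hr : Measurable r)
    (hpX : (fun ω => p (X ω)) =ᵐ[μ] μ[B.indicator 1 | m𝒳.comap X])
    (hrY : ∀ S, MeasurableSet S →
      ∫ ω in X ⁻¹' S ∩ B, Y ω ∂μ = ∫ ω in X ⁻¹' S ∩ B, r (X ω) ∂μ) :
    (fun ω => p (X ω) * μ[W | m𝒳.comap X] ω) =ᵐ[μ] fun ω => p (X ω) * r (X ω) := by
  have hm := hX.comap_le
  have hXm : Measurable[m𝒳.comap X] X := comap_measurable X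
  have hBW : B.indicator 1 * W = B.indicator W := by
    ext ω; by_cases hω : ω ∈ B <;> simp [hω]
  have hBW_int : Integrable (B.indicator 1 * W) μ := hBW ▸ hW.indicator hB
  have hp_int : Integrable (fun ω => p (X ω)) μ := integrable_condExp.congr hpX.symm
  have hfac : μ[B.indicator 1 * W | m𝒳.comap X] =ᵐ[μ] fun ω => p (X ω) * μ[W | m𝒳.comap X] ω :=
    (hindep.condExp_mul ((integrable_const 1).indicator hB) hW hBW_int).trans
      (hpX.symm.mul Filter.EventuallyEq.rfl)
  have hT : ∀ n : ℕ, MeasurableSet {x | |r x| ≤ n} := fun n =>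
    measurableSet_le hr.abs measurable_const
  -- `r (X)` need not be integrable, so the two sides are compared on the sets `{|r (X)| ≤ n}`.
  refine ae_eq_of_forall_setIntegral_inter_eq hm (t := fun n : ℕ => X ⁻¹' {x | |r x| ≤ n})
    (Set.iUnion_eq_univ_iff.2 fun ω => exists_nat_ge (|r (X ω)|))
    (fun n => (integrable_condExp.congr hfac).integrableOn)
    (fun n => hp_int.integrableOn.mul_bdd (hr.comp hX).aestronglyMeasurable
      (ae_restrict_of_forall_mem (hX (hT n)) fun ω hω => hω)) ?_
    ((hp.comp hXm).stronglyMeasurable.mul stronglyMeasurable_condExp).aestronglyMeasurable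
    ((hp.comp hXm).stronglyMeasurable.mul (hr.comp hXm).stronglyMeasurable).aestronglyMeasurable
  rintro n _ ⟨S, hS, rfl⟩
  have hST : MeasurableSet (S ∩ {x | |r x| ≤ n}) := hS.inter (hT n)
  rw [← Set.preimage_inter]
  calc ∫ ω in X ⁻¹' (S ∩ {x | |r x| ≤ n}), p (X ω) * μ[W | m𝒳.comap X] ω ∂μ
      = ∫ ω in X ⁻¹' (S ∩ {x | |r x| ≤ n}), μ[B.indicator 1 * W | m𝒳.comap X] ω ∂μ :=
        setIntegral_congr_ae (hX hST) (hfac.mono fun ω hω _ => hω.symm)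
    _ = ∫ ω in X ⁻¹' (S ∩ {x | |r x| ≤ n}), (B.indicator (1 : Ω → ℝ) * W) ω ∂μ :=
        setIntegral_condExp hm hBW_int ⟨_, hST, rfl⟩
    _ = ∫ ω in X ⁻¹' (S ∩ {x | |r x| ≤ n}) ∩ B, Y ω ∂μ := by
        rw [hBW, setIntegral_indicator hB]
        exact setIntegral_congr_fun ((hX hST).inter hB) fun ω hω => (hYW ω hω.2).symm
    _ = ∫ ω in X ⁻¹' (S ∩ {x | |r x| ≤ n}) ∩ B, r (X ω) ∂μ := hrY _ hST
    _ = ∫ ω in X ⁻¹' (S ∩ {x | |r x| ≤ n}), p (X ω) * r (X ω) ∂μ :=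
        setIntegral_preimage_inter_eq_setIntegral_mul hX hB hr hpX hST fun _ hx => hx.2

end ProbabilityTheory

theorem incremental_mixture_eq {δ p a a' b b' : ℝ} (hδ : 0 < δ) (hp : p ∈ Set.Icc 0 1)
    (ha : p * a = p * a') (hb : (1 - p) * b = (1 - p) * b') :
    δ * p / (δ * p + 1 - p) * a + (1 - δ * p / (δ * p + 1 - p)) * b
      = (δ * p * a' + (1 - p) * b') / (δ * p + 1 - p) := by
  have hD : 0 < δ * p + 1 - p := by nlinarith [mul_nonneg hδ.le hp.1, hp.2]
  field_simp
  linear_combination δ * ha + hb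

theorem incremental_identification_regression_form_general
    {Ω 𝒳 : Type*} [MeasurableSpace Ω] [StandardBorelSpace Ω]
    [MeasurableSpace 𝒳]
    (P : Measure Ω) [IsProbabilityMeasure P]
    (X : Ω → 𝒳) (A Y Y0 Y1 : Ω → ℝ)
    (hX : Measurable X) (hA : Measurable A)
    (hY0 : Integrable Y0 P) (hY1 : Integrable Y1 P)
    (hAbin : ∀ ω, A ω = 0 ∨ A ω = 1)
    -- consistency: Y = Yᵃ on {A = a}
    (hcons : ∀ ω, Y ω = if A ω = 1 then Y1 ω else Y0 ω)
    -- exchangeability: A ⟂ Yᵃ | X for a = 0, 1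
    (hexch0 : CondIndepFun (MeasurableSpace.comap X inferInstance) hX.comap_le A Y0 P)
    (hexch1 : CondIndepFun (MeasurableSpace.comap X inferInstance) hX.comap_le A Y1 P)
    -- π(x) = P(A = 1 | X = x)
    (π : 𝒳 → ℝ) (hπmeas : Measurable π)
    (hπ : (fun ω => π (X ω)) =ᵐ[P] P[A|MeasurableSpace.comap X inferInstance])
    -- μ(x,a) = E[Y | X = x, A = a]
    (μ1 μ0 : 𝒳 → ℝ) (hμ1meas : Measurable μ1) (hμ0meas : Measurable μ0)
    (hμ1 : ∀ S : Set 𝒳, MeasurableSet S →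
      ∫ ω in X ⁻¹' S ∩ {ω | A ω = 1}, Y ω ∂P = ∫ ω in X ⁻¹' S ∩ {ω | A ω = 1}, μ1 (X ω) ∂P)
    (hμ0 : ∀ S : Set 𝒳, MeasurableSet S →
      ∫ ω in X ⁻¹' S ∩ {ω | A ω = 0}, Y ω ∂P = ∫ ω in X ⁻¹' S ∩ {ω | A ω = 0}, μ0 (X ω) ∂P)
    (δ : ℝ) (hδ : 0 < δ) :
    ∫ ω, ((δ * π (X ω) / (δ * π (X ω) + 1 - π (X ω))) * (P[Y1|MeasurableSpace.comap X inferInstance]) ω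
        + (1 - δ * π (X ω) / (δ * π (X ω) + 1 - π (X ω))) * (P[Y0|MeasurableSpace.comap X inferInstance]) ω) ∂P
      = ∫ ω, (δ * π (X ω) * μ1 (X ω) + (1 - π (X ω)) * μ0 (X ω)) / (δ * π (X ω) + 1 - π (X ω)) ∂P := by
  have hA1 : {ω | A ω = 1}.indicator (1 : Ω → ℝ) = A := by
    ext ω; rcases hAbin ω with h | h <;> simp [h]
  have hA0 : {ω | A ω = 0}.indicator (1 : Ω → ℝ) = (fun _ => 1) - A := by
    ext ω; rcases hAbin ω with h | h <;> simp [h]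
  have hB1 : MeasurableSet {ω | A ω = 1} := hA (measurableSet_singleton 1)
  have hB0 : MeasurableSet {ω | A ω = 0} := hA (measurableSet_singleton 0)
  have hA_int : Integrable A P := hA1 ▸ (integrable_const 1).indicator hB1
  have hπ_mem : ∀ᵐ ω ∂P, π (X ω) ∈ Set.Icc 0 1 := by
    filter_upwards [hπ, condExp_mem_Icc (a := 0) (b := 1) hX.comap_le hA_int
      (ae_of_all _ fun ω => by rcases hAbin ω with h | h <;> simp [h])] with ω hω hω'
    rwa [hω]
  have hπ0 : (fun ω => 1 - π (X ω)) =ᵐ[P]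
      P[{ω | A ω = 0}.indicator 1 | MeasurableSpace.comap X inferInstance] := by
    rw [hA0]
    filter_upwards [hπ, condExp_sub (integrable_const 1) hA_int _] with ω hω hω'
    rw [hω', Pi.sub_apply, condExp_const hX.comap_le, hω]
  have h_treated := mul_condExp_ae_eq_mul_regression_of_condIndepFun hX hB1 hY1
    (by rwa [hA1]) (fun ω hω => by simp [hcons ω, show A ω = 1 from hω]) hπmeas hμ1meas
    (by rwa [hA1]) hμ1
  have h_control := mul_condExp_ae_eq_mul_regression_of_condIndepFun hX hB0 hY0
    (by rw [hA0]; exact hexch0.comp (measurable_const.sub measurable_id) measurable_id)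
    (fun ω hω => by simp [hcons ω, show A ω = 0 from hω]) (measurable_const.sub hπmeas) hμ0meas
    hπ0 hμ0
  refine integral_congr_ae ?_
  filter_upwards [h_treated, h_control, hπ_mem] with ω h1 h0 hω
  exact incremental_mixture_eq hδ hω h1 h0

/-- Identification of the incremental effect for one time point (regression form).
Under consistency and exchangeability, the counterfactual mean
`E[Y^Q] = E[q(π(X);δ) E(Y¹|X) + (1 - q(π(X);δ)) E(Y⁰|X)]` under the incremental
propensity score intervention `q(π;δ) = δπ/(δπ+1-π)` equals
`E[(δπ(X)μ(X,1) + (1-π(X))μ(X,0))/(δπ(X)+1-π(X))]`. -/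
theorem incremental_identification_regression_form
    {Ω 𝒳 : Type*} [MeasurableSpace Ω] [StandardBorelSpace Ω] [Nonempty Ω]
    [MeasurableSpace 𝒳]
    (P : Measure Ω) [IsProbabilityMeasure P]
    (X : Ω → 𝒳) (A Y Y0 Y1 : Ω → ℝ)
    (hX : Measurable X) (hA : Measurable A) (hY : Measurable Y)
    (hY0 : Integrable Y0 P) (hY1 : Integrable Y1 P)
    (hAbin : ∀ ω, A ω = 0 ∨ A ω = 1)
    -- consistency: Y = Yᵃ on {A = a}
    (hcons : ∀ ω, Y ω = if A ω = 1 then Y1 ω else Y0 ω)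
    -- exchangeability: A ⟂ Yᵃ | X for a = 0, 1
    (hexch0 : CondIndepFun (MeasurableSpace.comap X inferInstance) hX.comap_le A Y0 P)
    (hexch1 : CondIndepFun (MeasurableSpace.comap X inferInstance) hX.comap_le A Y1 P)
    -- π(x) = P(A = 1 | X = x)
    (π : 𝒳 → ℝ) (hπmeas : Measurable π)
    (hπ : (fun ω => π (X ω)) =ᵐ[P] P[A|MeasurableSpace.comap X inferInstance])
    -- μ(x,a) = E[Y | X = x, A = a]
    (μ1 μ0 : 𝒳 → ℝ) (hμ1meas : Measurable μ1) (hμ0meas : Measurable μ0)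
    (hμ1 : ∀ S : Set 𝒳, MeasurableSet S →
      ∫ ω in X ⁻¹' S ∩ {ω | A ω = 1}, Y ω ∂P = ∫ ω in X ⁻¹' S ∩ {ω | A ω = 1}, μ1 (X ω) ∂P)
    (hμ0 : ∀ S : Set 𝒳, MeasurableSet S →
      ∫ ω in X ⁻¹' S ∩ {ω | A ω = 0}, Y ω ∂P = ∫ ω in X ⁻¹' S ∩ {ω | A ω = 0}, μ0 (X ω) ∂P)
    (δ : ℝ) (hδ : 0 < δ) :
    ∫ ω, ((δ * π (X ω) / (δ * π (X ω) + 1 - π (X ω))) * (P[Y1|MeasurableSpace.comap X inferInstance]) ω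
        + (1 - δ * π (X ω) / (δ * π (X ω) + 1 - π (X ω))) * (P[Y0|MeasurableSpace.comap X inferInstance]) ω) ∂P
      = ∫ ω, (δ * π (X ω) * μ1 (X ω) + (1 - π (X ω)) * μ0 (X ω)) / (δ * π (X ω) + 1 - π (X ω)) ∂P :=
  incremental_identification_regression_form_general P X A Y Y0 Y1 hX hA hY0 hY1 hAbin hcons hexch0
    hexch1 π hπmeas hπ μ1 μ0 hμ1meas hμ0meas hμ1 hμ0 δ hδ
end

section
/- Monotonicity of the incremental effect curve under monotone treatment effect: if μ(x,1) ≥ μ(x,0) for all x and both are bounded, then δ ↦ ψ(δ) = E[(δπ(X)μ(X,1) + (1-π(X))μ(X,0))/(δπ(X)+1-π(X))] is nondecreasing on (0, ∞). -/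
open MeasureTheory

/-- Monotonicity of the incremental effect curve under a monotone treatment effect:
if `μ(x,1) ≥ μ(x,0)` for all `x` (both bounded), then `δ ↦ ψ(δ)` is nondecreasing
on `(0, ∞)`. -/
theorem incremental_effect_curve_monotone {𝒳 : Type*} [MeasurableSpace 𝒳]
    (P : Measure 𝒳) [IsProbabilityMeasure P]
    (π μ0 μ1 : 𝒳 → ℝ) (hπ : Measurable π) (hμ0 : Measurable μ0) (hμ1 : Measurable μ1)
    (M : ℝ) (hπ01 : ∀ x, π x ∈ Set.Icc (0 : ℝ) 1)
    (hM0 : ∀ x, |μ0 x| ≤ M) (hM1 : ∀ x, |μ1 x| ≤ M)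
    (hmono : ∀ x, μ0 x ≤ μ1 x)
    (ψ : ℝ → ℝ)
    (hψ : ∀ δ : ℝ, ψ δ =
      ∫ x, (δ * π x * μ1 x + (1 - π x) * μ0 x) / (δ * π x + 1 - π x) ∂P) :
    MonotoneOn ψ (Set.Ioi (0 : ℝ)) := by
  -- denominator positivity
  have hden : ∀ (δ : ℝ), 0 < δ → ∀ x, 0 < δ * π x + 1 - π x := by
    intro δ hδ x
    obtain ⟨h0, h1⟩ := hπ01 x
    rcases le_or_gt δ 1 with h | h
    · nlinarith [mul_nonneg (sub_nonneg.2 h) (sub_nonneg.2 h1)]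
    · nlinarith [mul_nonneg (sub_nonneg.2 h.le) h0]
  -- integrability of the integrand for each δ > 0
  have hint : ∀ (δ : ℝ), 0 < δ →
      Integrable (fun x => (δ * π x * μ1 x + (1 - π x) * μ0 x) / (δ * π x + 1 - π x)) P := by
    intro δ hδ
    have hmeas : Measurable
        (fun x => (δ * π x * μ1 x + (1 - π x) * μ0 x) / (δ * π x + 1 - π x)) := by
      exact (((measurable_const.mul hπ).mul hμ1).add
        ((measurable_const.sub hπ).mul hμ0)).div ((measurable_const.mul hπ).add_const 1 |>.sub hπ)
    refine Integrable.mono' (integrable_const M) hmeas.aestronglyMeasurable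
      (Filter.Eventually.of_forall fun x => ?_)
    have hd := hden δ hδ x
    obtain ⟨h0, h1⟩ := hπ01 x
    rw [Real.norm_eq_abs, abs_div, abs_of_pos hd, div_le_iff₀ hd]
    have h1' := hM1 x
    have h0' := hM0 x
    calc |δ * π x * μ1 x + (1 - π x) * μ0 x|
        ≤ |δ * π x * μ1 x| + |(1 - π x) * μ0 x| := abs_add_le _ _
      _ ≤ δ * π x * M + (1 - π x) * M := by
          have e1 : |δ * π x * μ1 x| ≤ δ * π x * M := by
            rw [abs_mul, abs_of_nonneg (by positivity : (0:ℝ) ≤ δ * π x)]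
            exact mul_le_mul_of_nonneg_left (hM1 x) (by positivity)
          have e2 : |(1 - π x) * μ0 x| ≤ (1 - π x) * M := by
            rw [abs_mul, abs_of_nonneg (by linarith : (0:ℝ) ≤ 1 - π x)]
            exact mul_le_mul_of_nonneg_left (hM0 x) (by linarith)
          linarith
      _ = M * (δ * π x + 1 - π x) := by ring
  intro δ₁ hδ₁ δ₂ hδ₂ hle
  simp only [Set.mem_Ioi] at hδ₁ hδ₂
  rw [hψ δ₁, hψ δ₂]
  refine integral_mono (hint δ₁ hδ₁) (hint δ₂ hδ₂) fun x => ?_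
  have hd₁ := hden δ₁ hδ₁ x
  have hd₂ := hden δ₂ hδ₂ x
  obtain ⟨h0, h1⟩ := hπ01 x
  rw [div_le_div_iff₀ hd₁ hd₂]
  nlinarith [mul_nonneg (mul_nonneg (mul_nonneg h0 (by linarith : (0:ℝ) ≤ 1 - π x))
    (by linarith : (0:ℝ) ≤ δ₂ - δ₁)) (by linarith [hmono x] : (0:ℝ) ≤ μ1 x - μ0 x)]
end

section
/- Unbiasedness of the un-centered influence function: with φ_a(Z) = 1(A=a)(Y - μ(X,a))/P(A=a|X) + μ(X,a) (on the event P(A=a|X)>0), γ(X) = μ(X,1) - μ(X,0), and φ(Z) = [δπ(X)φ₁(Z) + (1-π(X))φ₀(Z)]/(δπ(X)+1-π(X)) + δγ(X)(A - π(X))/(δπ(X)+1-π(X))², one has E[φ(Z)] = ψ(δ), where ψ(δ) = E[(δπ(X)μ(X,1)+(1-π(X))μ(X,0))/(δπ(X)+1-π(X))]. -/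
open MeasureTheory

/-!
Pointwise (wherever `0 < π(X) < 1`), `φ` is the integrand of `ψ(δ)` plus three terms of the form
`g(X) · R`, where `R` is one of the residuals `1(A=1)(Y - μ(X,1))`, `1(A=0)(Y - μ(X,0))`,
`A - π(X)`, each of which has zero conditional mean given `X`. Pulling `g(X)` out of the
conditional expectation given `σ(X)` shows that each such term integrates to zero. Integrability
comes from `δπ + 1 - π ≥ min δ 1`.
-/

lemma min_le_mul_add_one_sub {δ p : ℝ} (hp0 : 0 ≤ p) (hp1 : p ≤ 1) :
    min δ 1 ≤ δ * p + 1 - p := by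
  nlinarith [min_le_left δ 1, min_le_right δ 1]

lemma norm_div_le_norm_div_of_le {b D m : ℝ} (hm : 0 < m) (hmD : m ≤ D) :
    ‖b / D‖ ≤ ‖b‖ / m := by
  rw [norm_div, Real.norm_of_nonneg (hm.le.trans hmD)]
  exact div_le_div_of_nonneg_left (norm_nonneg b) hm hmD

lemma abs_tilted_mean_le {δ p : ℝ} (hδ : 0 < δ) (hp0 : 0 ≤ p) (hp1 : p ≤ 1) (m1 m0 : ℝ) :
    |(δ * p * m1 + (1 - p) * m0) / (δ * p + 1 - p)| ≤ |m1| + |m0| := by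
  have hD : 0 < δ * p + 1 - p := (lt_min hδ one_pos).trans_le (min_le_mul_add_one_sub hp0 hp1)
  rw [abs_div, abs_of_pos hD, div_le_iff₀ hD]
  calc |δ * p * m1 + (1 - p) * m0| ≤ δ * p * |m1| + (1 - p) * |m0| := by
        refine (abs_add_le _ _).trans_eq ?_
        rw [abs_mul (δ * p), abs_mul (1 - p), abs_of_nonneg (mul_nonneg hδ.le hp0),
          abs_of_nonneg (sub_nonneg.2 hp1)]
    _ ≤ (|m1| + |m0|) * (δ * p + 1 - p) := by
        nlinarith [abs_nonneg m1, abs_nonneg m0, mul_nonneg hδ.le hp0]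

lemma influence_function_decomposition {δ p a y m1 m0 i1 i0 : ℝ} (hp : p ≠ 0)
    (hq : 1 - p ≠ 0) :
    (δ * p * (i1 * (y - m1) / p + m1) + (1 - p) * (i0 * (y - m0) / (1 - p) + m0))
        / (δ * p + 1 - p) + δ * (m1 - m0) * (a - p) / (δ * p + 1 - p) ^ 2
      = (δ * p * m1 + (1 - p) * m0) / (δ * p + 1 - p)
        + δ / (δ * p + 1 - p) * (i1 * (y - m1)) + 1 / (δ * p + 1 - p) * (i0 * (y - m0))
        + δ * (m1 - m0) / (δ * p + 1 - p) ^ 2 * (a - p) := by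
  field_simp
  ring

section ConditionalMeanZero

variable {Ω 𝒳 : Type*} {mΩ : MeasurableSpace Ω} [m𝒳 : MeasurableSpace 𝒳]
  {P : Measure Ω} {X : Ω → 𝒳}

lemma MeasureTheory.Integrable.div_of_le {f D : Ω → ℝ} (hf : Integrable f P)
    (hD : AEStronglyMeasurable D P) {m : ℝ} (hm : 0 < m) (hmD : ∀ᵐ ω ∂P, m ≤ D ω) :
    Integrable (fun ω => f ω / D ω) P :=
  (hf.norm.div_const m).mono' (hf.aestronglyMeasurable.div₀ hD)
    (hmD.mono fun _ h => norm_div_le_norm_div_of_le hm h)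

lemma condExp_comap_ae_eq_zero [IsFiniteMeasure P] (hX : Measurable X) {f : Ω → ℝ}
    (hf : Integrable f P)
    (hf0 : ∀ S : Set 𝒳, MeasurableSet S → ∫ ω in X ⁻¹' S, f ω ∂P = 0) :
    P[f | m𝒳.comap X] =ᵐ[P] 0 := by
  have := isFiniteMeasure_trim (μ := P) hX.comap_le
  refine (ae_eq_condExp_of_forall_setIntegral_eq hX.comap_le hf
    (fun s _ _ => integrableOn_zero) ?_ aestronglyMeasurable_zero).symm
  rintro _ ⟨S, hS, rfl⟩ _
  simp [hf0 S hS]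

lemma integral_comp_mul_eq_zero [IsFiniteMeasure P] (hX : Measurable X) {f : Ω → ℝ}
    (hf : Integrable f P)
    (hf0 : ∀ S : Set 𝒳, MeasurableSet S → ∫ ω in X ⁻¹' S, f ω ∂P = 0)
    {g : 𝒳 → ℝ} (hg : Measurable g) (hgf : Integrable (fun ω => g (X ω) * f ω) P) :
    ∫ ω, g (X ω) * f ω ∂P = 0 := by
  have := isFiniteMeasure_trim (μ := P) hX.comap_le
  have hgX : StronglyMeasurable[m𝒳.comap X] (fun ω => g (X ω)) :=
    (hg.comp (comap_measurable X)).stronglyMeasurable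
  calc ∫ ω, g (X ω) * f ω ∂P = ∫ ω, P[(fun ω => g (X ω)) * f | m𝒳.comap X] ω ∂P :=
        (integral_condExp hX.comap_le).symm
    _ = ∫ ω, ((fun ω => g (X ω)) * P[f | m𝒳.comap X]) ω ∂P :=
        integral_congr_ae (condExp_mul_of_stronglyMeasurable_left hgX hgf hf)
    _ = ∫ _, (0 : ℝ) ∂P :=
        integral_congr_ae ((condExp_comap_ae_eq_zero hX hf hf0).mono fun ω h => by simp [h])
    _ = 0 := integral_zero _ _

lemma setIntegral_preimage_indicator_sub_eq_zero {E : Set Ω} (hE : MeasurableSet E)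
    {Y : Ω → ℝ} (hY : Integrable Y P) {m : 𝒳 → ℝ}
    (hm : Integrable (fun ω => m (X ω)) P)
    (hYm : ∀ S : Set 𝒳, MeasurableSet S →
      ∫ ω in X ⁻¹' S ∩ E, Y ω ∂P = ∫ ω in X ⁻¹' S ∩ E, m (X ω) ∂P)
    {S : Set 𝒳} (hS : MeasurableSet S) :
    ∫ ω in X ⁻¹' S, E.indicator (fun ω => Y ω - m (X ω)) ω ∂P = 0 := by
  rw [setIntegral_indicator hE, integral_sub hY.integrableOn hm.integrableOn, hYm S hS, sub_self]

lemma integral_comp_mul_outcome_residual_eq_zero [IsFiniteMeasure P] (hX : Measurable X)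
    {A Y : Ω → ℝ} (hA : Measurable A) (hY : Integrable Y P) {m : 𝒳 → ℝ}
    (hm : Integrable (fun ω => m (X ω)) P) (a : ℝ)
    (hYm : ∀ S : Set 𝒳, MeasurableSet S →
      ∫ ω in X ⁻¹' S ∩ {ω | A ω = a}, Y ω ∂P
        = ∫ ω in X ⁻¹' S ∩ {ω | A ω = a}, m (X ω) ∂P)
    {g : 𝒳 → ℝ} (hg : Measurable g) {C : ℝ} (hgC : ∀ᵐ ω ∂P, ‖g (X ω)‖ ≤ C) :
    Integrable (fun ω => g (X ω) * ((if A ω = a then 1 else 0) * (Y ω - m (X ω)))) P ∧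
      ∫ ω, g (X ω) * ((if A ω = a then 1 else 0) * (Y ω - m (X ω))) ∂P = 0 := by
  have hE : MeasurableSet {ω | A ω = a} := hA (measurableSet_singleton a)
  have hr : (fun ω => (if A ω = a then (1 : ℝ) else 0) * (Y ω - m (X ω)))
      = {ω | A ω = a}.indicator (fun ω => Y ω - m (X ω)) := by
    ext ω
    by_cases h : A ω = a <;> simp [h]
  have hrint : Integrable (fun ω => (if A ω = a then (1 : ℝ) else 0) * (Y ω - m (X ω))) P :=
    hr ▸ (hY.sub hm).indicator hE
  have hgr := hrint.bdd_mul (hg.comp hX).aestronglyMeasurable hgC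
  refine ⟨hgr, integral_comp_mul_eq_zero hX hrint (fun S hS => ?_) hg hgr⟩
  rw [hr]
  exact setIntegral_preimage_indicator_sub_eq_zero hE hY hm hYm hS

lemma integral_comp_mul_treatment_residual_eq_zero [IsFiniteMeasure P] (hX : Measurable X)
    {A : Ω → ℝ} (hA : Measurable A) (hAbin : ∀ ω, A ω = 0 ∨ A ω = 1)
    {π : 𝒳 → ℝ} (hπmeas : Measurable π)
    (hπ01 : ∀ᵐ ω ∂P, π (X ω) ∈ Set.Icc 0 1)
    (hπ : ∀ S : Set 𝒳, MeasurableSet S →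
      ∫ ω in X ⁻¹' S, A ω ∂P = ∫ ω in X ⁻¹' S, π (X ω) ∂P)
    {g : 𝒳 → ℝ} (hg : Measurable g) (hgX : Integrable (fun ω => g (X ω)) P) :
    Integrable (fun ω => g (X ω) * (A ω - π (X ω))) P ∧
      ∫ ω, g (X ω) * (A ω - π (X ω)) ∂P = 0 := by
  have hAint : Integrable A P :=
    .of_bound hA.aestronglyMeasurable 1
      (ae_of_all _ fun ω => by rcases hAbin ω with h | h <;> simp [h])
  have hπint : Integrable (fun ω => π (X ω)) P :=
    .of_bound (hπmeas.comp hX).aestronglyMeasurable 1 (hπ01.mono fun ω h => by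
      rw [Real.norm_of_nonneg h.1]; exact h.2)
  have hbound : ∀ᵐ ω ∂P, ‖A ω - π (X ω)‖ ≤ 1 := hπ01.mono fun ω h => by
    rw [Real.norm_eq_abs, abs_le]
    rcases hAbin ω with hA | hA <;> rw [hA] <;> constructor <;> linarith [h.1, h.2]
  have hgr : Integrable (fun ω => g (X ω) * (A ω - π (X ω))) P :=
    hgX.mul_bdd (hA.sub (hπmeas.comp hX)).aestronglyMeasurable hbound
  refine ⟨hgr, integral_comp_mul_eq_zero (f := fun ω => A ω - π (X ω)) hX (hAint.sub hπint)
    (fun S hS => ?_) hg hgr⟩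
  rw [integral_sub hAint.integrableOn hπint.integrableOn, hπ S hS, sub_self]

end ConditionalMeanZero

theorem influence_function_unbiased_general
    {Ω 𝒳 : Type*} [MeasurableSpace Ω] [MeasurableSpace 𝒳]
    (P : Measure Ω) [IsProbabilityMeasure P]
    (X : Ω → 𝒳) (A Y : Ω → ℝ)
    (hX : Measurable X) (hA : Measurable A)
    (hYint : Integrable Y P)
    (hAbin : ∀ ω, A ω = 0 ∨ A ω = 1)
    (δ : ℝ) (hδ : 0 < δ)
    -- π(x) = P(A = 1 | X = x), with π(X) ∈ (0,1) a.s.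
    (π : 𝒳 → ℝ) (hπmeas : Measurable π)
    (hπ : ∀ S : Set 𝒳, MeasurableSet S →
      ∫ ω in X ⁻¹' S, A ω ∂P = ∫ ω in X ⁻¹' S, π (X ω) ∂P)
    (hπ01 : ∀ᵐ ω ∂P, π (X ω) ∈ Set.Ioo (0 : ℝ) 1)
    -- μ(x,a) = E[Y | X = x, A = a]
    (μ1 μ0 : 𝒳 → ℝ) (hμ1meas : Measurable μ1) (hμ0meas : Measurable μ0)
    (hμ1int : Integrable (fun ω => μ1 (X ω)) P)
    (hμ0int : Integrable (fun ω => μ0 (X ω)) P)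
    (hμ1 : ∀ S : Set 𝒳, MeasurableSet S →
      ∫ ω in X ⁻¹' S ∩ {ω | A ω = 1}, Y ω ∂P
        = ∫ ω in X ⁻¹' S ∩ {ω | A ω = 1}, μ1 (X ω) ∂P)
    (hμ0 : ∀ S : Set 𝒳, MeasurableSet S →
      ∫ ω in X ⁻¹' S ∩ {ω | A ω = 0}, Y ω ∂P
        = ∫ ω in X ⁻¹' S ∩ {ω | A ω = 0}, μ0 (X ω) ∂P)
    -- the pieces φ₁, φ₀ and the full un-centered influence function φ
    (φ1 φ0 φ : Ω → ℝ)
    (hφ1 : ∀ ω, φ1 ω = (if A ω = 1 then (1 : ℝ) else 0) * (Y ω - μ1 (X ω)) / π (X ω)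
        + μ1 (X ω))
    (hφ0 : ∀ ω, φ0 ω = (if A ω = 0 then (1 : ℝ) else 0) * (Y ω - μ0 (X ω)) / (1 - π (X ω))
        + μ0 (X ω))
    (hφ : ∀ ω, φ ω = (δ * π (X ω) * φ1 ω + (1 - π (X ω)) * φ0 ω)
          / (δ * π (X ω) + 1 - π (X ω))
        + δ * (μ1 (X ω) - μ0 (X ω)) * (A ω - π (X ω))
          / (δ * π (X ω) + 1 - π (X ω)) ^ 2) :
    ∫ ω, φ ω ∂P
      = ∫ ω, (δ * π (X ω) * μ1 (X ω) + (1 - π (X ω)) * μ0 (X ω))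
              / (δ * π (X ω) + 1 - π (X ω)) ∂P := by
  have hπIcc : ∀ᵐ ω ∂P, π (X ω) ∈ Set.Icc 0 1 :=
    hπ01.mono fun _ h => Set.Ioo_subset_Icc_self h
  have hmin : 0 < min δ 1 := lt_min hδ one_pos
  have hD : ∀ᵐ ω ∂P, min δ 1 ≤ δ * π (X ω) + 1 - π (X ω) :=
    hπIcc.mono fun _ h => min_le_mul_add_one_sub h.1 h.2
  obtain ⟨hint1, hzero1⟩ :=
    integral_comp_mul_outcome_residual_eq_zero hX hA hYint hμ1int 1 hμ1
      (g := fun x => δ / (δ * π x + 1 - π x)) (by fun_prop)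
      (hD.mono fun _ h => norm_div_le_norm_div_of_le hmin h)
  obtain ⟨hint0, hzero0⟩ :=
    integral_comp_mul_outcome_residual_eq_zero hX hA hYint hμ0int 0 hμ0
      (g := fun x => 1 / (δ * π x + 1 - π x)) (by fun_prop)
      (hD.mono fun _ h => norm_div_le_norm_div_of_le hmin h)
  obtain ⟨hint2, hzero2⟩ :=
    integral_comp_mul_treatment_residual_eq_zero hX hA hAbin hπmeas hπIcc hπ
      (g := fun x => δ * (μ1 x - μ0 x) / (δ * π x + 1 - π x) ^ 2) (by fun_prop)
      (((hμ1int.sub hμ0int).const_mul δ).div_of_le (by fun_prop) (pow_pos hmin 2)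
        (hD.mono fun _ h => pow_le_pow_left₀ hmin.le h 2))
  have htarget : Integrable (fun ω => (δ * π (X ω) * μ1 (X ω) + (1 - π (X ω)) * μ0 (X ω))
      / (δ * π (X ω) + 1 - π (X ω))) P :=
    (hμ1int.norm.add hμ0int.norm).mono' (Measurable.aestronglyMeasurable (by fun_prop))
      (hπIcc.mono fun _ h => abs_tilted_mean_le hδ h.1 h.2 _ _)
  have hdecomp : φ =ᵐ[P] fun ω => (δ * π (X ω) * μ1 (X ω) + (1 - π (X ω)) * μ0 (X ω))
      / (δ * π (X ω) + 1 - π (X ω))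
      + δ / (δ * π (X ω) + 1 - π (X ω)) * ((if A ω = 1 then 1 else 0) * (Y ω - μ1 (X ω)))
      + 1 / (δ * π (X ω) + 1 - π (X ω)) * ((if A ω = 0 then 1 else 0) * (Y ω - μ0 (X ω)))
      + δ * (μ1 (X ω) - μ0 (X ω)) / (δ * π (X ω) + 1 - π (X ω)) ^ 2
        * (A ω - π (X ω)) :=
    hπ01.mono fun ω h => by
      rw [hφ, hφ1, hφ0]
      exact influence_function_decomposition h.1.ne' (sub_ne_zero.2 h.2.ne')
  rw [integral_congr_ae hdecomp, integral_add (by exact (htarget.add hint1).add hint0) hint2,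
    integral_add (by exact htarget.add hint1) hint0, integral_add htarget hint1,
    hzero1, hzero0, hzero2, add_zero, add_zero, add_zero]

/-- Unbiasedness of the un-centered influence function: with
`φₐ(Z) = 1(A=a)(Y - μ(X,a))/P(A=a|X) + μ(X,a)`, `γ(X) = μ(X,1) - μ(X,0)` and
`φ(Z) = [δπ(X)φ₁(Z) + (1-π(X))φ₀(Z)]/(δπ(X)+1-π(X)) + δγ(X)(A-π(X))/(δπ(X)+1-π(X))²`,
one has `E[φ(Z)] = ψ(δ) = E[(δπ(X)μ(X,1)+(1-π(X))μ(X,0))/(δπ(X)+1-π(X))]`. -/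
theorem influence_function_unbiased
    {Ω 𝒳 : Type*} [MeasurableSpace Ω] [MeasurableSpace 𝒳]
    (P : Measure Ω) [IsProbabilityMeasure P]
    (X : Ω → 𝒳) (A Y : Ω → ℝ)
    (hX : Measurable X) (hA : Measurable A) (hY : Measurable Y)
    (hYint : Integrable Y P)
    (hAbin : ∀ ω, A ω = 0 ∨ A ω = 1)
    (δ : ℝ) (hδ : 0 < δ)
    -- π(x) = P(A = 1 | X = x), with π(X) ∈ (0,1) a.s.
    (π : 𝒳 → ℝ) (hπmeas : Measurable π)
    (hπ : ∀ S : Set 𝒳, MeasurableSet S →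
      ∫ ω in X ⁻¹' S, A ω ∂P = ∫ ω in X ⁻¹' S, π (X ω) ∂P)
    (hπ01 : ∀ᵐ ω ∂P, π (X ω) ∈ Set.Ioo (0 : ℝ) 1)
    -- μ(x,a) = E[Y | X = x, A = a]
    (μ1 μ0 : 𝒳 → ℝ) (hμ1meas : Measurable μ1) (hμ0meas : Measurable μ0)
    (hμ1int : Integrable (fun ω => μ1 (X ω)) P)
    (hμ0int : Integrable (fun ω => μ0 (X ω)) P)
    (hμ1 : ∀ S : Set 𝒳, MeasurableSet S →
      ∫ ω in X ⁻¹' S ∩ {ω | A ω = 1}, Y ω ∂P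
        = ∫ ω in X ⁻¹' S ∩ {ω | A ω = 1}, μ1 (X ω) ∂P)
    (hμ0 : ∀ S : Set 𝒳, MeasurableSet S →
      ∫ ω in X ⁻¹' S ∩ {ω | A ω = 0}, Y ω ∂P
        = ∫ ω in X ⁻¹' S ∩ {ω | A ω = 0}, μ0 (X ω) ∂P)
    -- the pieces φ₁, φ₀ and the full un-centered influence function φ
    (φ1 φ0 φ : Ω → ℝ)
    (hφ1 : ∀ ω, φ1 ω = (if A ω = 1 then (1 : ℝ) else 0) * (Y ω - μ1 (X ω)) / π (X ω)
        + μ1 (X ω))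
    (hφ0 : ∀ ω, φ0 ω = (if A ω = 0 then (1 : ℝ) else 0) * (Y ω - μ0 (X ω)) / (1 - π (X ω))
        + μ0 (X ω))
    (hφ : ∀ ω, φ ω = (δ * π (X ω) * φ1 ω + (1 - π (X ω)) * φ0 ω)
          / (δ * π (X ω) + 1 - π (X ω))
        + δ * (μ1 (X ω) - μ0 (X ω)) * (A ω - π (X ω))
          / (δ * π (X ω) + 1 - π (X ω)) ^ 2)
    (hφint : Integrable φ P) :
    ∫ ω, φ ω ∂P
      = ∫ ω, (δ * π (X ω) * μ1 (X ω) + (1 - π (X ω)) * μ0 (X ω))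
              / (δ * π (X ω) + 1 - π (X ω)) ∂P :=
  influence_function_unbiased_general P X A Y hX hA hYint hAbin δ hδ π hπmeas hπ hπ01 μ1 μ0 hμ1meas
    hμ0meas hμ1int hμ0int hμ1 hμ0 φ1 φ0 φ hφ1 hφ0 hφ
end
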